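/- Let n ≥ 1 and let t = (t_{i,j,k})_{1 ≤ i < j < k ≤ n} be a family of integers such that the normal form map N_t : ℤ^n → G(t) is bijective. Let t_w = (t_{i,j,k})_{1 ≤ i < j < k ≤ n−1} be the subfamily of entries with all indices different from n. Then the normal form map N_{t_w} : ℤ^{n−1} → G(t_w) is also bijective; i.e., if t is consistent then t_w is consistent. -/

import Mathlib

/-!
The last generator `a_n` is central in `G(t)`: its relations with the other generators have
empty tail. Sending `a_n ↦ 1` therefore defines a surjection `G(t) → G(t_w)` that maps
`N_t(x)` to `N_{t_w}(x_1, …, x_{n-1})`, so surjectivity of `N_t` descends. Conversely the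
relations of `t_w` hold in `G(t) / ⟨a_n⟩`, giving a map `G(t_w) → G(t) / ⟨a_n⟩` that sends
`N_{t_w}(x)` to the class of `N_t(x, 0)`. Two such classes agree only if
`N_t(x, c) = N_t(x, 0) a_n^c = N_t(y, 0)` for some `c`, so injectivity of `N_t` descends too.
-/

namespace HallPoly

/-- The ordered product `g_1^{e_1} ⋯ g_n^{e_n}` taken in increasing order of indices. -/
def prodPow {Γ : Type*} [Group Γ] (n : ℕ) (g : Fin n → Γ) (e : Fin n → ℤ) : Γ :=
  ((List.finRange n).map fun k => g k ^ e k).prod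

/-- The relators of the presented group `G(t)`:
`(a_i · a_j · a_{j+1}^{t_{i,j,j+1}} ⋯ a_n^{t_{i,j,n}})⁻¹ · (a_j · a_i)` for `1 ≤ i < j ≤ n`. -/
def rels (n : ℕ) (t : Fin n → Fin n → Fin n → ℤ) : Set (FreeGroup (Fin n)) :=
  { r | ∃ i j : Fin n, i < j ∧
      r = (FreeGroup.of i * FreeGroup.of j *
            prodPow n FreeGroup.of (fun k => if j < k then t i j k else 0))⁻¹ *
          (FreeGroup.of j * FreeGroup.of i) }

/-- The presented group `G(t)` with generators `a_1, …, a_n` and relations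
`a_j·a_i = a_i·a_j·a_{j+1}^{t_{i,j,j+1}} ⋯ a_n^{t_{i,j,n}}` for `1 ≤ i < j ≤ n`. -/
abbrev G (n : ℕ) (t : Fin n → Fin n → Fin n → ℤ) : Type := PresentedGroup (rels n t)

/-- The generators `a_1, …, a_n` of `G(t)`. -/
def a (n : ℕ) (t : Fin n → Fin n → Fin n → ℤ) (i : Fin n) : G n t :=
  PresentedGroup.of i

/-- The normal form map `N_t : ℤⁿ → G(t)`, `x ↦ a_1^{x_1} ⋯ a_n^{x_n}`. -/
def N (n : ℕ) (t : Fin n → Fin n → Fin n → ℤ) (x : Fin n → ℤ) : G n t :=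
  prodPow n (a n t) x

end HallPoly

lemma Subgroup.normal_zpowers_of_mem_center {Γ : Type*} [Group Γ] {z : Γ}
    (hz : z ∈ Subgroup.center Γ) : (Subgroup.zpowers z).Normal where
  conj_mem := by
    rintro _ ⟨k, rfl⟩ g
    rw [Subgroup.mem_center_iff.mp (Subgroup.zpow_mem _ hz k) g, mul_inv_cancel_right]
    exact ⟨k, rfl⟩

namespace HallPoly

section ProdPow

variable {Γ : Type*} [Group Γ]

lemma prodPow_succ (n : ℕ) (g : Fin (n + 1) → Γ) (e : Fin (n + 1) → ℤ) :
    prodPow (n + 1) g e =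
      prodPow n (Fin.init g) (Fin.init e) * g (Fin.last n) ^ e (Fin.last n) := by
  simp only [prodPow, ← List.ofFn_eq_map]
  rw [List.ofFn_succ', List.prod_concat]
  rfl

lemma map_prodPow {H : Type*} [Group H] (φ : Γ →* H) (n : ℕ) (g : Fin n → Γ)
    (e : Fin n → ℤ) :
    φ (prodPow n g e) = prodPow n (φ ∘ g) e := by
  simp [prodPow, map_list_prod, Function.comp_def]

lemma prodPow_zero (n : ℕ) (g : Fin n → Γ) : prodPow n g 0 = 1 := by
  simp [prodPow]

end ProdPow

def relExp {n : ℕ} (t : Fin n → Fin n → Fin n → ℤ) (i j : Fin n) : Fin n → ℤ :=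
  fun k => if j < k then t i j k else 0

def SatisfiesRels {H : Type*} [Group H] {n : ℕ} (t : Fin n → Fin n → Fin n → ℤ)
    (f : Fin n → H) : Prop :=
  ∀ i j, i < j → f j * f i = f i * f j * prodPow n f (relExp t i j)

lemma relExp_last {m : ℕ} (t : Fin (m + 1) → Fin (m + 1) → Fin (m + 1) → ℤ)
    (i : Fin (m + 1)) :
    relExp t i (Fin.last m) = 0 :=
  funext fun k => if_neg (Fin.le_last k).not_gt

lemma init_relExp_castSucc {m : ℕ} {t : Fin (m + 1) → Fin (m + 1) → Fin (m + 1) → ℤ}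
    {tw : Fin m → Fin m → Fin m → ℤ}
    (htw : ∀ i j k : Fin m, tw i j k = t i.castSucc j.castSucc k.castSucc) (i j : Fin m) :
    Fin.init (relExp t i.castSucc j.castSucc) = relExp tw i j := by
  funext k
  simp [Fin.init, relExp, htw]

section Presentation

variable {n : ℕ} {t : Fin n → Fin n → Fin n → ℤ} {H : Type*} [Group H]

lemma satisfiesRels_a : SatisfiesRels t (a n t) := by
  intro i j hij
  have h := PresentedGroup.one_of_mem (rels := rels n t) ⟨i, j, hij, rfl⟩
  rw [map_mul, map_inv, inv_mul_eq_one, map_mul, map_mul, map_prodPow, map_mul] at h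
  exact h.symm

def lift (f : Fin n → H) (hf : SatisfiesRels t f) : G n t →* H :=
  PresentedGroup.toGroup (f := f) <| by
    rintro r ⟨i, j, hij, rfl⟩
    rw [map_mul, map_inv, inv_mul_eq_one, map_mul, map_mul, map_prodPow, map_mul]
    simp only [FreeGroup.lift_apply_of, Function.comp_def]
    exact (hf i j hij).symm

lemma lift_a (f : Fin n → H) (hf : SatisfiesRels t f) (i : Fin n) : lift f hf (a n t i) = f i :=
  PresentedGroup.toGroup.of _

lemma lift_N (f : Fin n → H) (hf : SatisfiesRels t f) (x : Fin n → ℤ) :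
    lift f hf (N n t x) = prodPow n f x := by
  rw [N, map_prodPow]
  exact congrArg₂ _ (funext (lift_a f hf)) rfl

end Presentation

section LastGenerator

variable {m : ℕ} {t : Fin (m + 1) → Fin (m + 1) → Fin (m + 1) → ℤ}
  {tw : Fin m → Fin m → Fin m → ℤ}

lemma a_last_mem_center : a (m + 1) t (Fin.last m) ∈ Subgroup.center (G (m + 1) t) := by
  refine Subgroup.mem_center_iff.mpr fun g => Subgroup.mem_centralizer_singleton_iff.mp <|
    PresentedGroup.generated_by _ _ (fun i => ?_) g
  rw [Subgroup.mem_centralizer_singleton_iff]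
  rcases (Fin.le_last i).lt_or_eq with hi | rfl
  · have h := satisfiesRels_a (t := t) i (Fin.last m) hi
    rw [relExp_last, prodPow_zero, mul_one] at h
    exact h.symm
  · rfl

instance : (Subgroup.zpowers (a (m + 1) t (Fin.last m))).Normal :=
  Subgroup.normal_zpowers_of_mem_center a_last_mem_center

lemma mk'_a_last :
    QuotientGroup.mk' (Subgroup.zpowers (a (m + 1) t (Fin.last m))) (a (m + 1) t (Fin.last m)) =
      1 :=
  (QuotientGroup.eq_one_iff _).mpr (Subgroup.mem_zpowers _)

lemma N_snoc (x : Fin m → ℤ) (c : ℤ) :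
    N (m + 1) t (Fin.snoc x c) = N (m + 1) t (Fin.snoc x 0) * a (m + 1) t (Fin.last m) ^ c := by
  simp only [N, prodPow_succ, Fin.init_snoc, Fin.snoc_last, zpow_zero, mul_one]

variable (htw : ∀ i j k : Fin m, tw i j k = t i.castSucc j.castSucc k.castSucc)
include htw

lemma satisfiesRels_snoc_a_one :
    SatisfiesRels t (Fin.snoc (α := fun _ => G m tw) (a m tw) 1) := by
  intro i j hij
  rw [prodPow_succ, Fin.init_snoc, Fin.snoc_last, one_zpow, mul_one]
  rcases Fin.eq_castSucc_or_eq_last j with ⟨j, rfl⟩ | rfl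
  · obtain ⟨i, rfl⟩ : ∃ i', Fin.castSucc i' = i :=
      ⟨_, Fin.castSucc_castPred i (Fin.ne_last_of_lt hij)⟩
    simp only [Fin.snoc_castSucc, init_relExp_castSucc htw]
    exact satisfiesRels_a i j (Fin.castSucc_lt_castSucc_iff.mp hij)
  · rw [relExp_last, Fin.snoc_last, one_mul, mul_one]
    exact (mul_one _).symm.trans (congrArg _ (prodPow_zero _ _).symm)

def dropLast : G (m + 1) t →* G m tw :=
  lift _ (satisfiesRels_snoc_a_one htw)

lemma dropLast_N (x : Fin (m + 1) → ℤ) :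
    dropLast htw (N (m + 1) t x) = N m tw (Fin.init x) := by
  rw [dropLast, lift_N, prodPow_succ, Fin.init_snoc, Fin.snoc_last, one_zpow, mul_one]
  rfl

lemma dropLast_surjective : Function.Surjective (dropLast htw) := by
  refine fun g => PresentedGroup.generated_by _ (dropLast htw).range
    (fun i => ⟨a (m + 1) t i.castSucc, ?_⟩) g
  rw [dropLast, lift_a, Fin.snoc_castSucc]
  rfl

lemma satisfiesRels_mk'_a_castSucc :
    SatisfiesRels tw (Fin.init (QuotientGroup.mk' (Subgroup.zpowers (a (m + 1) t (Fin.last m))) ∘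
      a (m + 1) t)) := by
  intro i j hij
  have h := congrArg (QuotientGroup.mk' (Subgroup.zpowers (a (m + 1) t (Fin.last m))))
    (satisfiesRels_a _ _ (Fin.castSucc_lt_castSucc_iff.mpr hij))
  rw [map_mul, map_mul, map_mul, map_prodPow, prodPow_succ, init_relExp_castSucc htw] at h
  simpa only [Fin.init_def, Function.comp_apply, mk'_a_last, one_zpow, mul_one] using h

def toQuotientLast : G m tw →* G (m + 1) t ⧸ Subgroup.zpowers (a (m + 1) t (Fin.last m)) :=
  lift _ (satisfiesRels_mk'_a_castSucc htw)

lemma toQuotientLast_N (x : Fin m → ℤ) :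
    toQuotientLast htw (N m tw x) = QuotientGroup.mk' _ (N (m + 1) t (Fin.snoc x 0)) := by
  rw [toQuotientLast, lift_N, N, map_prodPow, prodPow_succ, Fin.init_snoc, Fin.snoc_last,
    zpow_zero, mul_one]

lemma N_surjective_of_N_succ_surjective (hN : Function.Surjective (N (m + 1) t)) :
    Function.Surjective (N m tw) := by
  intro g
  obtain ⟨x, hx⟩ := (dropLast_surjective htw).comp hN g
  exact ⟨Fin.init x, (dropLast_N htw x).symm.trans hx⟩

lemma N_injective_of_N_succ_injective (hN : Function.Injective (N (m + 1) t)) :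
    Function.Injective (N m tw) := by
  intro x y hxy
  have h := congrArg (toQuotientLast htw) hxy
  rw [toQuotientLast_N, toQuotientLast_N, QuotientGroup.mk'_eq_mk'] at h
  obtain ⟨_, ⟨c, rfl⟩, hc⟩ := h
  rw [← N_snoc] at hc
  simpa only [Fin.init_snoc] using congrArg Fin.init (hN hc)

end LastGenerator

/-- If `G(t)` is consistent, then so is `G(t_w)`, where `t_w` is the subfamily of `t` of
entries with all indices different from `n`: the normal form map `N_{t_w} : ℤ^{n-1} → G(t_w)`
is also bijective. -/
theorem consistent_tw (m : ℕ) (t : Fin (m + 1) → Fin (m + 1) → Fin (m + 1) → ℤ)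
    (hN : Function.Bijective (N (m + 1) t))
    (tw : Fin m → Fin m → Fin m → ℤ)
    (htw : ∀ i j k : Fin m, tw i j k = t i.castSucc j.castSucc k.castSucc) :
    Function.Bijective (N m tw) :=
  ⟨N_injective_of_N_succ_injective htw hN.1, N_surjective_of_N_succ_surjective htw hN.2⟩

end HallPoly
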